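/- In the setting of the two key approximation lemmas (uniform norm bound K for Δ and all Δᵢ; convergence of traces of polynomials), suppose additionally that ln Det_{πᵢ}(Δᵢ) ≥ 0 for all i, where F_{Δᵢ}(K) = d. Then limᵢ F_{Δᵢ}(0) = F_Δ(0) and ln Det_π(Δ) ≥ limsupᵢ ln Det_{πᵢ}(Δᵢ) ≥ 0; in particular Δ is of determinant class. -/

import Mathlib

open MeasureTheory Filter Set

/-- Spectral density function `F_Δ(lam) = μ([0, lam])`. -/
noncomputable def sdf (μ : Measure ℝ) (lam : ℝ) : ℝ := (μ (Icc 0 lam)).toReal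

/-!
Moment convergence on a common compact interval is weak convergence. Since `∫_{0⁺} log dμi ≥ 0`,
Chebyshev's inequality for the negative part of `log` bounds `μi (0, δ]` by
`log⁺ K * d / log⁺ δ⁻¹` uniformly in `i`, so no mass of the `μi` drifts into the atom at `0` in the
limit: testing against tents, the atoms at `0` converge, hence so do the integrals over `(0, ∞)` of
continuous functions. Applied to the truncations `log (max x δ) ≥ log x`, this gives
`0 ≤ limsup ∫_{0⁺} log dμi ≤ ∫_{0⁺} log (max x δ) dμ` for every `δ > 0`; Fatou's lemma then makes
`log` integrable for `μ`, and dominated convergence lets `δ → 0`.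
-/

open Topology Real Polynomial

section CompactSupport

variable {ν : Measure ℝ} {a b : ℝ}

lemma measure_Iio_eq_zero_of_measure_compl_Icc_eq_zero (hν : ν (Icc a b)ᶜ = 0) :
    ν (Iio a) = 0 :=
  measure_mono_null (fun x (hx : x < a) (h : x ∈ Icc a b) => not_le.2 hx h.1) hν

lemma Continuous.integrable_of_measure_compl_Icc_eq_zero [IsFiniteMeasureOnCompacts ν]
    {f : ℝ → ℝ} (hf : Continuous f) (hν : ν (Icc a b)ᶜ = 0) : Integrable f ν := by
  rw [← Measure.restrict_eq_self_of_ae_mem (mem_ae_iff.2 hν)]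
  exact hf.continuousOn.integrableOn_compact isCompact_Icc

lemma abs_integral_sub_le_of_forall_mem_Icc [IsFiniteMeasure ν] {f g : ℝ → ℝ} {ε : ℝ}
    (hν : ν (Icc a b)ᶜ = 0) (hf : Integrable f ν) (hg : Integrable g ν)
    (hfg : ∀ x ∈ Icc a b, |f x - g x| ≤ ε) :
    |∫ x, f x ∂ν - ∫ x, g x ∂ν| ≤ ε * ν.real univ := by
  rw [← integral_sub hf hg]
  exact norm_integral_le_of_norm_le_const (f := fun x => f x - g x)
    (Eventually.mono (mem_ae_iff.2 hν) hfg)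

theorem tendsto_integral_of_tendsto_integral_polynomial {ι : Type*} {l : Filter ι}
    {μ : Measure ℝ} {μi : ι → Measure ℝ} [IsFiniteMeasure μ] [∀ i, IsFiniteMeasure (μi i)]
    {C : ℝ} (hμ : μ (Icc a b)ᶜ = 0) (hμi : ∀ i, μi i (Icc a b)ᶜ = 0)
    (hC : ∀ i, (μi i).real univ ≤ C)
    (hmom : ∀ p : ℝ[X], Tendsto (fun i => ∫ x, p.eval x ∂μi i) l (𝓝 (∫ x, p.eval x ∂μ)))
    {f : ℝ → ℝ} (hf : Continuous f) :
    Tendsto (fun i => ∫ x, f x ∂μi i) l (𝓝 (∫ x, f x ∂μ)) := by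
  rw [Metric.tendsto_nhds]
  intro ε hε
  set M := μ.real univ + |C| + 1
  have hM : 0 < M := by positivity
  obtain ⟨p, hp⟩ := exists_polynomial_near_of_continuousOn a b f hf.continuousOn (ε / M)
    (by positivity)
  have hfp : ∀ x ∈ Icc a b, |f x - p.eval x| ≤ ε / M := fun x hx =>
    (abs_sub_comm _ _).trans_le (hp x hx).le
  have hμfp := abs_integral_sub_le_of_forall_mem_Icc hμ
    (hf.integrable_of_measure_compl_Icc_eq_zero hμ)
    (p.continuous.integrable_of_measure_compl_Icc_eq_zero hμ) hfp
  filter_upwards [Metric.tendsto_nhds.1 (hmom p) (ε / M) (by positivity)] with i hi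
  have hμifp := abs_integral_sub_le_of_forall_mem_Icc (hμi i)
    (hf.integrable_of_measure_compl_Icc_eq_zero (hμi i))
    (p.continuous.integrable_of_measure_compl_Icc_eq_zero (hμi i)) hfp
  have hμiC : ε / M * (μi i).real univ ≤ ε / M * |C| :=
    mul_le_mul_of_nonneg_left ((hC i).trans (le_abs_self C)) (by positivity)
  have hεM : ε / M * |C| + ε / M + ε / M * μ.real univ = ε := by
    field_simp
    ring
  rw [Real.dist_eq] at hi ⊢
  rw [abs_le] at hμfp hμifp
  rw [abs_lt] at hi ⊢
  constructor <;> linarith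

end CompactSupport

section Atom

variable {ν : Measure ℝ} {δ : ℝ}

noncomputable def tent (δ x : ℝ) : ℝ := max 0 (1 - |x| / δ)

lemma continuous_tent (δ : ℝ) : Continuous (tent δ) := by
  unfold tent
  fun_prop

lemma indicator_singleton_le_tent (δ : ℝ) : ({0} : Set ℝ).indicator 1 ≤ tent δ := by
  intro x
  by_cases hx : x = 0 <;> simp [hx, tent]

lemma tent_le_indicator_Icc (hδ : 0 < δ) : tent δ ≤ (Icc (-δ) δ).indicator 1 := by
  intro x
  by_cases hx : x ∈ Icc (-δ) δ
  · rw [indicator_of_mem hx]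
    exact max_le zero_le_one (sub_le_self 1 (div_nonneg (abs_nonneg x) hδ.le))
  · rw [indicator_of_notMem hx]
    have : δ < |x| := by
      rw [mem_Icc, ← abs_le] at hx
      exact not_le.1 hx
    exact max_le le_rfl (by rw [sub_nonpos, one_le_div hδ]; exact this.le)

lemma integrable_tent [IsFiniteMeasure ν] (hδ : 0 < δ) : Integrable (tent δ) ν :=
  Integrable.of_bound (continuous_tent δ).aestronglyMeasurable 1 <| ae_of_all _ fun x => by
    have h0 : 0 ≤ tent δ x := le_max_left _ _
    rw [Real.norm_of_nonneg h0]
    exact (tent_le_indicator_Icc hδ x).trans (indicator_le_self' (fun _ _ => zero_le_one) x)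

lemma measureReal_singleton_le_integral_tent [IsFiniteMeasure ν] (hδ : 0 < δ) :
    ν.real {0} ≤ ∫ x, tent δ x ∂ν := by
  rw [← integral_indicator_one (measurableSet_singleton 0)]
  exact integral_mono ((integrable_const 1).indicator (measurableSet_singleton 0))
    (integrable_tent hδ) (indicator_singleton_le_tent δ)

lemma integral_tent_le_measureReal_Icc [IsFiniteMeasure ν] (hδ : 0 < δ) :
    ∫ x, tent δ x ∂ν ≤ ν.real (Icc (-δ) δ) := by
  rw [← integral_indicator_one measurableSet_Icc]
  exact integral_mono (integrable_tent hδ)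
    ((integrable_const 1).indicator measurableSet_Icc) (tent_le_indicator_Icc hδ)

lemma measureReal_Icc_le_singleton_add_Ioc [IsFiniteMeasure ν] (hν : ν (Iio 0) = 0) :
    ν.real (Icc (-δ) δ) ≤ ν.real {0} + ν.real (Ioc 0 δ) := by
  have hsub : Icc (-δ) δ ⊆ Iio 0 ∪ ({0} ∪ Ioc 0 δ) := by
    intro x hx
    rcases lt_trichotomy x 0 with h | h | h
    · exact Or.inl h
    · exact Or.inr (Or.inl h)
    · exact Or.inr (Or.inr ⟨h, hx.2⟩)
  calc ν.real (Icc (-δ) δ) ≤ ν.real (Iio 0 ∪ ({0} ∪ Ioc 0 δ)) := measureReal_mono hsub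
    _ ≤ ν.real (Iio 0) + (ν.real {0} + ν.real (Ioc 0 δ)) :=
      (measureReal_union_le _ _).trans (add_le_add_right (measureReal_union_le _ _) _)
    _ = ν.real {0} + ν.real (Ioc 0 δ) := by
      rw [measureReal_def, hν, ENNReal.toReal_zero, zero_add]

/-- Testing against tents: the upper bound for the limit atom comes from continuity of `μ` from
above, the lower bound from the absence of mass of the `μi` just to the right of `0`. -/
theorem tendsto_measureReal_singleton_zero {ι : Type*} {l : Filter ι} {μ : Measure ℝ}
    {μi : ι → Measure ℝ} [IsFiniteMeasure μ] [∀ i, IsFiniteMeasure (μi i)]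
    (hweak : ∀ f : ℝ → ℝ, Continuous f →
      Tendsto (fun i => ∫ x, f x ∂μi i) l (𝓝 (∫ x, f x ∂μ)))
    (hμi : ∀ i, μi i (Iio 0) = 0)
    (htight : ∀ ε > 0, ∃ δ > 0, ∀ i, (μi i).real (Ioc 0 δ) ≤ ε) :
    Tendsto (fun i => (μi i).real {0}) l (𝓝 (μ.real {0})) := by
  refine tendsto_order.2 ⟨fun c hc => ?_, fun c hc => ?_⟩
  · obtain ⟨δ, hδ, hδi⟩ := htight ((μ.real {0} - c) / 2) (by linarith)
    have hμ := measureReal_singleton_le_integral_tent (ν := μ) hδ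
    filter_upwards [(tendsto_order.1 (hweak _ (continuous_tent δ))).1
      (c + (μ.real {0} - c) / 2) (by linarith)] with i hi
    linarith [integral_tent_le_measureReal_Icc (ν := μi i) hδ,
      measureReal_Icc_le_singleton_add_Ioc (δ := δ) (hμi i), hδi i]
  · have hcont : Tendsto (fun δ => μ.real (Icc (-δ) δ)) (𝓝[>] 0) (𝓝 (μ.real {0})) := by
      simpa [measureReal_def, Function.comp_def] using
        (ENNReal.tendsto_toReal (measure_ne_top μ {0})).comp
          (tendsto_measure_Icc_nhdsWithin_right' μ 0)
    obtain ⟨δ, hδc, hδ⟩ := ((hcont.eventually (gt_mem_nhds hc)).and self_mem_nhdsWithin).exists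
    filter_upwards [(tendsto_order.1 (hweak _ (continuous_tent δ))).2 c
      ((integral_tent_le_measureReal_Icc hδ).trans_lt hδc)] with i hi
    exact (measureReal_singleton_le_integral_tent hδ).trans_lt hi

end Atom

section PositiveHalfLine

variable {ν : Measure ℝ}

lemma integral_eq_measureReal_singleton_mul_add_setIntegral_Ioi (hν : ν (Iio 0) = 0)
    {f : ℝ → ℝ} (hf : Integrable f ν) :
    ∫ x, f x ∂ν = ν.real {0} * f 0 + ∫ x in Ioi 0, f x ∂ν := by
  have hIci : ν.restrict (Ici 0) = ν :=
    Measure.restrict_eq_self_of_ae_mem (mem_ae_iff.2 (by rwa [compl_Ici] : ν (Ici 0)ᶜ = 0))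
  calc ∫ x, f x ∂ν = ∫ x in Ici 0, f x ∂ν := by rw [hIci]
    _ = ∫ x in {0}, f x ∂ν + ∫ x in Ioi 0, f x ∂ν := by
      rw [← Ioi_insert, insert_eq, setIntegral_union (by simp) measurableSet_Ioi
        hf.integrableOn hf.integrableOn]
    _ = ν.real {0} * f 0 + ∫ x in Ioi 0, f x ∂ν := by rw [integral_singleton, smul_eq_mul]

lemma tendsto_setIntegral_Ioi_of_tendsto_integral {ι : Type*} {l : Filter ι} {μ : Measure ℝ}
    {μi : ι → Measure ℝ} {f : ℝ → ℝ} (hμ : μ (Iio 0) = 0) (hμi : ∀ i, μi i (Iio 0) = 0)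
    (hf : Integrable f μ) (hfi : ∀ i, Integrable f (μi i))
    (hint : Tendsto (fun i => ∫ x, f x ∂μi i) l (𝓝 (∫ x, f x ∂μ)))
    (hatom : Tendsto (fun i => (μi i).real {0}) l (𝓝 (μ.real {0}))) :
    Tendsto (fun i => ∫ x in Ioi 0, f x ∂μi i) l (𝓝 (∫ x in Ioi 0, f x ∂μ)) := by
  have hsplit : ∀ ν : Measure ℝ, ν (Iio 0) = 0 → Integrable f ν →
      ∫ x in Ioi 0, f x ∂ν = ∫ x, f x ∂ν - ν.real {0} * f 0 := fun ν hν hf => by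
    rw [integral_eq_measureReal_singleton_mul_add_setIntegral_Ioi hν hf]
    ring
  rw [hsplit μ hμ hf]
  exact (hint.sub (hatom.mul_const (f 0))).congr fun i => (hsplit _ (hμi i) (hfi i)).symm

end PositiveHalfLine

section Log

variable {ν : Measure ℝ} {δ x : ℝ}

/-- Chebyshev's inequality for `log⁺ x⁻¹ = log⁺ x - log x`, whose integral over `(0, ∞)` is at most
that of `log⁺ x` once the logarithmic integral is nonnegative. -/
lemma measureReal_Ioc_mul_posLog_inv_le [IsFiniteMeasure ν] {K : ℝ} (hν : ν (Icc 0 K)ᶜ = 0)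
    (hlog : IntegrableOn log (Ioi 0) ν) (hnn : 0 ≤ ∫ x in Ioi 0, log x ∂ν) (hδ : 0 < δ) :
    ν.real (Ioc 0 δ) * log⁺ δ⁻¹ ≤ log⁺ K * ν.real univ := by
  have hpos : Integrable log⁺ ν := continuous_posLog.integrable_of_measure_compl_Icc_eq_zero hν
  have hinv : EqOn (fun x => log⁺ x - log x) (fun x => log⁺ x⁻¹) (Ioi 0) := fun x _ => by
    linarith [posLog_sub_posLog_inv (x := x)]
  have hneg : IntegrableOn (fun x => log⁺ x⁻¹) (Ioi 0) ν :=
    (hpos.integrableOn.sub hlog).congr_fun hinv measurableSet_Ioi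
  calc ν.real (Ioc 0 δ) * log⁺ δ⁻¹ = ∫ _ in Ioc 0 δ, log⁺ δ⁻¹ ∂ν := by
        rw [setIntegral_const, smul_eq_mul]
    _ ≤ ∫ x in Ioc 0 δ, log⁺ x⁻¹ ∂ν :=
      setIntegral_mono_on (integrableOn_const (measure_ne_top _ _))
        (hneg.mono_set Ioc_subset_Ioi_self) measurableSet_Ioc fun x hx =>
          posLog_le_posLog (inv_nonneg.2 hδ.le) (inv_anti₀ hx.1 hx.2)
    _ ≤ ∫ x in Ioi 0, log⁺ x⁻¹ ∂ν :=
      setIntegral_mono_set hneg (ae_of_all _ fun _ => posLog_nonneg)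
        Ioc_subset_Ioi_self.eventuallyLE
    _ = ∫ x in Ioi 0, log⁺ x ∂ν - ∫ x in Ioi 0, log x ∂ν := by
      rw [← integral_sub hpos.integrableOn hlog]
      exact (setIntegral_congr_fun measurableSet_Ioi hinv).symm
    _ ≤ ∫ x, log⁺ x ∂ν := by
      linarith [setIntegral_le_integral (s := Ioi 0) hpos (ae_of_all ν fun x => posLog_nonneg)]
    _ ≤ log⁺ K * ν.real univ := by
      refine (le_abs_self _).trans (norm_integral_le_of_norm_le_const (f := log⁺) ?_)
      filter_upwards [mem_ae_iff.2 hν] with x hx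
      rw [Real.norm_of_nonneg posLog_nonneg]
      exact posLog_le_posLog hx.1 hx.2

lemma exists_forall_measureReal_Ioc_le {ι : Type*} {μi : ι → Measure ℝ} {B : ℝ}
    (hB : ∀ i, ∀ δ > 0, (μi i).real (Ioc 0 δ) * log⁺ δ⁻¹ ≤ B) {ε : ℝ} (hε : 0 < ε) :
    ∃ δ > 0, ∀ i, (μi i).real (Ioc 0 δ) ≤ ε := by
  set L := |B| / ε + 1
  have hL : 0 < L := by positivity
  refine ⟨exp (-L), exp_pos _, fun i => ?_⟩
  have hlog : log⁺ (exp (-L))⁻¹ = L := by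
    rw [posLog_apply, ← exp_neg, neg_neg, log_exp, max_eq_right hL.le]
  have hεL : ε * L = |B| + ε := by
    rw [mul_add, mul_div_cancel₀ _ hε.ne', mul_one]
  have := hB i (exp (-L)) (exp_pos _)
  rw [hlog] at this
  exact le_of_mul_le_mul_right (by linarith [le_abs_self B]) hL

lemma continuous_log_max (hδ : 0 < δ) : Continuous fun x => log (max x δ) :=
  (continuous_id.max continuous_const).log fun x => (hδ.trans_le (le_max_right x δ)).ne'

lemma log_le_log_max (hx : 0 < x) (δ : ℝ) : log x ≤ log (max x δ) :=
  log_le_log hx (le_max_left x δ)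

lemma abs_log_max_le_abs_log (hx : 0 < x) (hδ : 0 < δ) (hδ1 : δ ≤ 1) :
    |log (max x δ)| ≤ |log x| := by
  rcases le_total x δ with h | h
  · rw [max_eq_right h, abs_of_nonpos (log_nonpos hδ.le hδ1),
      abs_of_nonpos (log_nonpos hx.le (h.trans hδ1))]
    exact neg_le_neg (log_le_log hx h)
  · rw [max_eq_left h]

lemma abs_log_max_le (hδ : 0 < δ) (hδ1 : δ ≤ 1) (x : ℝ) :
    |log (max x δ)| ≤ 2 * log (max x 1) - log (max x δ) := by
  have hle : log (max x δ) ≤ log (max x 1) :=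
    log_le_log (hδ.trans_le (le_max_right _ _)) (max_le_max le_rfl hδ1)
  have hnn : 0 ≤ log (max x 1) := log_nonneg (le_max_right x 1)
  exact abs_le.2 ⟨by linarith, by linarith⟩

lemma tendsto_log_max (hx : 0 < x) : Tendsto (fun δ => log (max x δ)) (𝓝 0) (𝓝 (log x)) :=
  tendsto_const_nhds.congr' <|
    (gt_mem_nhds hx).mono fun _ h => (congrArg log (max_eq_left h.le)).symm

/-- Fatou's lemma along `δ = 1 / (n + 1)`: by `abs_log_max_le`, nonnegativity of the truncated
integrals bounds their absolute versions by `2 ∫ log (max x 1)`. -/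
theorem integrableOn_log_of_setIntegral_log_max_nonneg
    (hint : ∀ δ > 0, IntegrableOn (fun x => log (max x δ)) (Ioi 0) ν)
    (hnn : ∀ δ ∈ Ioc (0 : ℝ) 1, 0 ≤ ∫ x in Ioi 0, log (max x δ) ∂ν) :
    IntegrableOn log (Ioi 0) ν := by
  set δ : ℕ → ℝ := fun n => 1 / (n + 1)
  have hδ : ∀ n, δ n ∈ Ioc (0 : ℝ) 1 := fun n =>
    ⟨Nat.one_div_pos_of_nat, div_le_one_of_le₀ (by simp) (by positivity)⟩
  have hbound : ∀ n, ∫⁻ x in Ioi 0, ‖log (max x (δ n))‖ₑ ∂ν ≤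
      ENNReal.ofReal (2 * ∫ x in Ioi 0, log (max x 1) ∂ν) := fun n => by
    have hg := hint _ (hδ n).1
    rw [← ofReal_integral_norm_eq_lintegral_enorm hg]
    refine ENNReal.ofReal_le_ofReal ?_
    calc ∫ x in Ioi 0, ‖log (max x (δ n))‖ ∂ν
        ≤ ∫ x in Ioi 0, (2 * log (max x 1) - log (max x (δ n))) ∂ν :=
          integral_mono hg.norm (((hint 1 one_pos).const_mul 2).sub hg)
            (abs_log_max_le (hδ n).1 (hδ n).2)
      _ = 2 * ∫ x in Ioi 0, log (max x 1) ∂ν - ∫ x in Ioi 0, log (max x (δ n)) ∂ν := by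
          rw [integral_sub ((hint 1 one_pos).const_mul 2) hg, integral_const_mul]
      _ ≤ 2 * ∫ x in Ioi 0, log (max x 1) ∂ν := by linarith [hnn _ (hδ n)]
  refine integrable_of_tendsto (G := fun n x => log (max x (δ n))) ?_
    (fun n => (hint _ (hδ n).1).aestronglyMeasurable)
    (ne_top_of_le_ne_top ENNReal.ofReal_ne_top
      (liminf_le_of_frequently_le' (Frequently.of_forall hbound)))
  filter_upwards [ae_restrict_mem measurableSet_Ioi] with x hx
  exact (tendsto_log_max hx).comp tendsto_one_div_add_atTop_nhds_zero_nat

theorem tendsto_setIntegral_log_max (hlog : IntegrableOn log (Ioi 0) ν) :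
    Tendsto (fun δ => ∫ x in Ioi 0, log (max x δ) ∂ν) (𝓝[>] 0)
      (𝓝 (∫ x in Ioi 0, log x ∂ν)) := by
  refine tendsto_integral_filter_of_dominated_convergence (fun x => |log x|)
    (Eventually.of_forall fun _ =>
      (measurable_log.comp (measurable_id.max measurable_const)).aestronglyMeasurable)
    ?_ hlog.abs ?_
  · filter_upwards [Ioc_mem_nhdsGT one_pos] with δ hδ
    filter_upwards [ae_restrict_mem measurableSet_Ioi] with x hx
    exact abs_log_max_le_abs_log hx hδ.1 hδ.2
  · filter_upwards [ae_restrict_mem measurableSet_Ioi] with x hx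
    exact (tendsto_log_max hx).mono_left nhdsWithin_le_nhds

theorem integrableOn_log_and_limsup_setIntegral_log_le {ι : Type*} {l : Filter ι} [l.NeBot]
    {μ : Measure ℝ} {μi : ι → Measure ℝ}
    (hint : ∀ δ > 0, Integrable (fun x => log (max x δ)) μ)
    (hinti : ∀ δ > 0, ∀ i, Integrable (fun x => log (max x δ)) (μi i))
    (hlogi : ∀ i, IntegrableOn log (Ioi 0) (μi i)) (hnn : ∀ i, 0 ≤ ∫ x in Ioi 0, log x ∂μi i)
    (htrunc : ∀ δ > 0, Tendsto (fun i => ∫ x in Ioi 0, log (max x δ) ∂μi i) l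
      (𝓝 (∫ x in Ioi 0, log (max x δ) ∂μ))) :
    IntegrableOn log (Ioi 0) μ ∧
    0 ≤ limsup (fun i => ∫ x in Ioi 0, log x ∂μi i) l ∧
    limsup (fun i => ∫ x in Ioi 0, log x ∂μi i) l ≤ ∫ x in Ioi 0, log x ∂μ := by
  have hle {δ : ℝ} (hδ : 0 < δ) i :
      ∫ x in Ioi 0, log x ∂μi i ≤ ∫ x in Ioi 0, log (max x δ) ∂μi i :=
    setIntegral_mono_on (hlogi i) (hinti δ hδ i).integrableOn measurableSet_Ioi
      fun x hx => log_le_log_max hx δ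
  have hlimsup {δ : ℝ} (hδ : 0 < δ) :
      limsup (fun i => ∫ x in Ioi 0, log x ∂μi i) l ≤ ∫ x in Ioi 0, log (max x δ) ∂μ :=
    (limsup_le_limsup (Eventually.of_forall (hle hδ)) (isCoboundedUnder_le_of_le l hnn)
      (htrunc δ hδ).isBoundedUnder_le).trans_eq (htrunc δ hδ).limsup_eq
  have hlog : IntegrableOn log (Ioi 0) μ :=
    integrableOn_log_of_setIntegral_log_max_nonneg (fun δ hδ => (hint δ hδ).integrableOn)
      fun δ hδ => ge_of_tendsto (htrunc δ hδ.1)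
        (Eventually.of_forall fun i => (hnn i).trans (hle hδ.1 i))
  exact ⟨hlog,
    le_limsup_of_frequently_le (Frequently.of_forall hnn)
      ((htrunc 1 one_pos).isBoundedUnder_le.mono_le (Eventually.of_forall (hle one_pos))),
    ge_of_tendsto (tendsto_setIntegral_log_max hlog)
      (eventually_nhdsWithin_of_forall fun _ hδ => hlimsup hδ)⟩

end Log

theorem stmt_12_general {ι : Type*} [Preorder ι] [Nonempty ι] [IsDirected ι (· ≤ ·)]
    (d : ℕ) (K : ℝ)
    (μ : Measure ℝ) (μi : ι → Measure ℝ)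
    [IsFiniteMeasure μ] [∀ i, IsFiniteMeasure (μi i)]
    (hs : μ (Icc 0 K)ᶜ = 0) (hsi : ∀ i, (μi i) (Icc 0 K)ᶜ = 0)
    (hdi : ∀ i, ((μi i) Set.univ).toReal = d)
    (hmom : ∀ p : Polynomial ℝ,
      Tendsto (fun i => ∫ x, p.eval x ∂(μi i)) atTop (nhds (∫ x, p.eval x ∂μ)))
    (hdeti : ∀ i, IntegrableOn Real.log (Ioi 0) (μi i) ∧
      0 ≤ ∫ x in Ioi (0 : ℝ), Real.log x ∂(μi i)) :
    Tendsto (fun i => sdf (μi i) 0) atTop (nhds (sdf μ 0)) ∧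
    IntegrableOn Real.log (Ioi 0) μ ∧
    0 ≤ limsup (fun i => ∫ x in Ioi (0 : ℝ), Real.log x ∂(μi i)) atTop ∧
    limsup (fun i => ∫ x in Ioi (0 : ℝ), Real.log x ∂(μi i)) atTop ≤
      ∫ x in Ioi (0 : ℝ), Real.log x ∂μ := by
  have hneg : ∀ {ν : Measure ℝ}, ν (Icc 0 K)ᶜ = 0 → ν (Iio 0) = 0 :=
    measure_Iio_eq_zero_of_measure_compl_Icc_eq_zero
  have hweak : ∀ f : ℝ → ℝ, Continuous f →
      Tendsto (fun i => ∫ x, f x ∂μi i) atTop (𝓝 (∫ x, f x ∂μ)) := fun f hf =>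
    tendsto_integral_of_tendsto_integral_polynomial hs hsi (fun i => (hdi i).le) hmom hf
  have hatom : Tendsto (fun i => (μi i).real {0}) atTop (𝓝 (μ.real {0})) :=
    tendsto_measureReal_singleton_zero hweak (fun i => hneg (hsi i)) fun ε hε =>
      exists_forall_measureReal_Ioc_le (fun i δ hδ =>
        (measureReal_Ioc_mul_posLog_inv_le (hsi i) (hdeti i).1 (hdeti i).2 hδ).trans_eq
          (by rw [measureReal_def, hdi i])) hε
  have hint {δ : ℝ} (hδ : 0 < δ) (ν : Measure ℝ) (hν : ν (Icc 0 K)ᶜ = 0) [IsFiniteMeasure ν] :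
      Integrable (fun x => log (max x δ)) ν :=
    (continuous_log_max hδ).integrable_of_measure_compl_Icc_eq_zero hν
  refine ⟨by simpa [sdf, measureReal_def] using hatom,
    integrableOn_log_and_limsup_setIntegral_log_le (fun δ hδ => hint hδ μ hs)
      (fun δ hδ i => hint hδ _ (hsi i)) (fun i => (hdeti i).1) (fun i => (hdeti i).2)
      fun δ hδ => ?_⟩
  exact tendsto_setIntegral_Ioi_of_tendsto_integral (hneg hs) (fun i => hneg (hsi i))
    (hint hδ μ hs) (fun i => hint hδ _ (hsi i)) (hweak _ (continuous_log_max hδ)) hatom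

/-- In the approximation setting (uniform norm bound `K`, spectral measures of total
mass `d` supported in `[0,K]`, convergence of traces of polynomials), suppose
additionally that `ln Det_{πᵢ}(Δᵢ) = ∫_{0⁺}^∞ ln(lam) dF_{Δᵢ}(lam) ≥ 0` (in particular
the integral converges) for all `i`.  Then `limᵢ F_{Δᵢ}(0) = F_Δ(0)`, `Δ` is of
determinant class, and `ln Det_π(Δ) ≥ limsupᵢ ln Det_{πᵢ}(Δᵢ) ≥ 0`. -/
theorem stmt_12 {ι : Type*} [Preorder ι] [Nonempty ι] [IsDirected ι (· ≤ ·)]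
    (d : ℕ) (K : ℝ)
    (μ : Measure ℝ) (μi : ι → Measure ℝ)
    [IsFiniteMeasure μ] [∀ i, IsFiniteMeasure (μi i)]
    (hs : μ (Icc 0 K)ᶜ = 0) (hsi : ∀ i, (μi i) (Icc 0 K)ᶜ = 0)
    (hd : (μ Set.univ).toReal = d) (hdi : ∀ i, ((μi i) Set.univ).toReal = d)
    (hmom : ∀ p : Polynomial ℝ,
      Tendsto (fun i => ∫ x, p.eval x ∂(μi i)) atTop (nhds (∫ x, p.eval x ∂μ)))
    (hdeti : ∀ i, IntegrableOn Real.log (Ioi 0) (μi i) ∧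
      0 ≤ ∫ x in Ioi (0 : ℝ), Real.log x ∂(μi i)) :
    Tendsto (fun i => sdf (μi i) 0) atTop (nhds (sdf μ 0)) ∧
    IntegrableOn Real.log (Ioi 0) μ ∧
    0 ≤ limsup (fun i => ∫ x in Ioi (0 : ℝ), Real.log x ∂(μi i)) atTop ∧
    limsup (fun i => ∫ x in Ioi (0 : ℝ), Real.log x ∂(μi i)) atTop ≤
      ∫ x in Ioi (0 : ℝ), Real.log x ∂μ :=
  stmt_12_general d K μ μi hs hsi hdi hmom hdeti
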